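/- Fix m ∈ ℕ*. Let (f_n) be a sequence of functions in F_m and assume that f_n converges uniformly on [0,1] to a function f. Then there exists a function g ∈ F_m such that f(λ) ≤ g(λ) for every λ ∈ (0,1]. -/

import Mathlib

open scoped Classical ENNReal
open Filter

/-- A rooted tree with vertex labels in `A`, modeled as a set of finite words over `A`
closed under taking initial segments. The root is the empty word `[]`, and the children
of a vertex `v` are the words `v ++ [a]` belonging to the tree. -/
structure RTree (A : Type*) where
  mem : Set (List A)
  root_mem : [] ∈ mem
  parent_mem : ∀ (v : List A) (a : A), v ++ [a] ∈ mem → v ∈ mem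

namespace RTree

variable {A : Type*}

/-- The tree is locally finite: every vertex has finitely many children. -/
def LocFin (T : RTree A) : Prop := ∀ v ∈ T.mem, {a : A | v ++ [a] ∈ T.mem}.Finite

/-- Number of children of a vertex. -/
noncomputable def numChildren (T : RTree A) (v : List A) : ℕ :=
  {a : A | v ++ [a] ∈ T.mem}.ncard

/-- Degree of a vertex (number of children, plus one for the parent except at the root). -/
noncomputable def degree (T : RTree A) (v : List A) : ℕ :=
  T.numChildren v + (if v = [] then 0 else 1)

/-- Number of vertices at generation `n`. -/
noncomputable def levelCard (T : RTree A) (n : ℕ) : ℕ :=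
  {v ∈ T.mem | v.length = n}.ncard

/-- The subtree of descendants of `y`, rooted at `y`. -/
def subtree (T : RTree A) (y : List A) : RTree A where
  mem := insert [] {l : List A | y ++ l ∈ T.mem}
  root_mem := Set.mem_insert _ _
  parent_mem := by
    intro v a hv
    rw [Set.mem_insert_iff] at hv
    rcases hv with h | h
    · exact absurd h (by simp)
    · exact Set.mem_insert_iff.mpr <| Or.inr <|
        T.parent_mem (y ++ v) a (by simpa [List.append_assoc] using h)

/-- One-step transition probabilities of the `λ`-biased random walk `RW_λ`:
from a non-root vertex with `k` children, move to the parent with probability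
`1/(1+kλ)` and to each child with probability `λ/(1+kλ)`; from the root, move
to each of its children with equal probability. -/
noncomputable def step (T : RTree A) (lam : ℝ) (x y : List A) : ℝ :=
  if x ∈ T.mem ∧ y ∈ T.mem then
    if ∃ a : A, y = x ++ [a] then
      if x = [] then 1 / (T.numChildren x : ℝ)
      else lam / (1 + (T.numChildren x : ℝ) * lam)
    else if x ≠ [] ∧ y = x.dropLast then 1 / (1 + (T.numChildren x : ℝ) * lam)
    else 0
  else 0

/-- Probability of a finite trajectory (product of one-step transition probabilities). -/
noncomputable def pathProb (T : RTree A) (lam : ℝ) : List (List A) → ℝ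
  | [] => 1
  | [_] => 1
  | x :: y :: r => T.step lam x y * pathProb T lam (y :: r)

/-- Probability that the walk started at the root satisfies the constraint `P i` at
every time `0 ≤ i ≤ M`. -/
noncomputable def cylProb (T : RTree A) (lam : ℝ) (M : ℕ) (P : ℕ → List A → Prop) : ℝ :=
  ∑' l : {l : List (List A) // l.length = M + 1 ∧ l.head? = some ([] : List A) ∧
      ∀ (i : ℕ) (h : i < l.length), P i (l.get ⟨i, h⟩)},
    T.pathProb lam l.1

/-- Probability that the walk started at the root never returns to the root
(the decreasing limit over `M` of the probabilities of no return up to time `M`). -/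
noncomputable def escProb (T : RTree A) (lam : ℝ) : ℝ :=
  ⨅ M : ℕ, T.cylProb lam M fun i v => i ≠ 0 → v ≠ []

/-- Probability that the walk started at the root moves to `y` at its first step and
never returns to the root. -/
noncomputable def escProbVia (T : RTree A) (lam : ℝ) (y : List A) : ℝ :=
  ⨅ M : ℕ, T.cylProb lam M fun i v => (i ≠ 0 → v ≠ []) ∧ (i = 1 → v = y)

/-- `RW_λ` is recurrent: started at the root, it returns to the root almost surely. -/
def Recurrent (T : RTree A) (lam : ℝ) : Prop := T.escProb lam = 0

/-- `RW_λ` is transient: started at the root, it fails to return with positive probability. -/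
def Transient (T : RTree A) (lam : ℝ) : Prop := 0 < T.escProb lam

/-- Effective conductance `C(λ,T) = λ·deg(o)·P(no return to the root)`. -/
noncomputable def conductance (T : RTree A) (lam : ℝ) : ℝ :=
  lam * (T.numChildren ([] : List A) : ℝ) * T.escProb lam

/-- Law of the limit walk: `phi T lam y` is the probability that the walk eventually
stays in the subtree above `y`, i.e. that the limit walk `ω_λ^∞` passes through `y`
(equivalently, `ω_λ^∞(i) = y.take i` for all `i ≤ y.length`). -/
noncomputable def phi (T : RTree A) (lam : ℝ) (y : List A) : ℝ :=
  ⨆ N : ℕ, ⨅ M : ℕ, T.cylProb lam (N + M) fun i v => N ≤ i → y <+: v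

/-- An infinite simple path from the root. -/
def IsRay (T : RTree A) (r : ℕ → List A) : Prop :=
  r 0 = [] ∧ ∀ n, r n ∈ T.mem ∧ ∃ a : A, r (n + 1) = r n ++ [a]

/-- An edge-cutset, each edge being recorded by its endpoint farther from the root:
every infinite simple path from the root uses one of these edges. -/
def IsECutset (T : RTree A) (c : Set (List A)) : Prop :=
  (∀ v ∈ c, v ∈ T.mem ∧ v ≠ []) ∧ ∀ r, T.IsRay r → ∃ n, r (n + 1) ∈ c

/-- A vertex-cutset: every infinite simple path from the root meets it. -/
def IsVCutset (T : RTree A) (c : Set (List A)) : Prop :=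
  (∀ v ∈ c, v ∈ T.mem) ∧ ∀ r, T.IsRay r → ∃ n, r n ∈ c

/-- The branching number `br(T) = sup {λ ≥ 1 : inf over cutsets c of Σ_{e∈c} λ^{-|e|} > 0}`. -/
noncomputable def br (T : RTree A) : ℝ :=
  sSup {lam : ℝ | 1 ≤ lam ∧
    0 < ⨅ (c : Set (List A)) (_ : T.IsECutset c),
      ∑' e : c, ENNReal.ofReal (lam⁻¹ ^ (e : List A).length)}

/-- The critical parameter `λ_c(T) = 1 / br(T)`. -/
noncomputable def lambdaC (T : RTree A) : ℝ := 1 / T.br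

/-- Spherically symmetric tree: the degree of a vertex depends only on its generation. -/
def SphSymm (T : RTree A) : Prop :=
  ∀ v ∈ T.mem, ∀ w ∈ T.mem, v.length = w.length → T.numChildren v = T.numChildren w

/-- Uniformly transient tree. -/
def UniformlyTransient (T : RTree A) : Prop :=
  ∀ lam : ℝ, T.lambdaC < lam → ∃ α > (0 : ℝ), ∀ v ∈ T.mem, α ≤ (T.subtree v).escProb lam

/-- Weakly uniformly transient tree. -/
def WeaklyUniformlyTransient (T : RTree A) : Prop :=
  ∃ c : ℕ → Set (List A),
    (∀ n, T.IsVCutset (c n) ∧ (c n).Finite) ∧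
    (Pairwise fun i j => Disjoint (c i) (c j)) ∧
    ∀ lam : ℝ, T.lambdaC < lam → ∃ α > (0 : ℝ), ∀ n, ∀ v ∈ c n, α ≤ (T.subtree v).escProb lam

/-- Vertices of the periodic tree `T^{∞,F}` obtained by repeatedly grafting a copy of
the finite tree `F` at every leaf: a word belongs to it iff it is a concatenation of
root-to-leaf words of `F` followed by a word of `F`. -/
inductive GraftMem (F : RTree A) : List A → Prop
  | base (v : List A) (hv : v ∈ F.mem) : GraftMem F v
  | graft (v w : List A) (hv : v ∈ F.mem) (hne : v ≠ []) (hleaf : F.numChildren v = 0)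
      (hw : GraftMem F w) : GraftMem F (v ++ w)

/-- The periodic tree `T^{∞,F}`. -/
def periodicTree (F : RTree A) : RTree A where
  mem := {l | GraftMem F l}
  root_mem := GraftMem.base [] F.root_mem
  parent_mem := by
    have H : ∀ l, GraftMem F l → ∀ (v : List A) (a : A), l = v ++ [a] → GraftMem F v := by
      intro l hl
      induction hl with
      | base v hv =>
          intro u a h
          subst h
          exact GraftMem.base u (F.parent_mem u a hv)
      | graft v w hv hne hleaf hw ih =>
          intro u a h
          rcases w.eq_nil_or_concat' with hwnil | ⟨w', b, hww⟩
          · subst hwnil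
            rw [List.append_nil] at h
            subst h
            exact GraftMem.base u (F.parent_mem u a hv)
          · subst hww
            rw [← List.append_assoc] at h
            have h2 := congrArg List.dropLast h
            simp only [List.dropLast_concat] at h2
            subst h2
            exact GraftMem.graft v w' hv hne hleaf (ih w' b rfl)
    exact fun v a hva => H (v ++ [a]) hva v a rfl

end RTree

/-- The class `A_m` of infinite, locally finite, spherically symmetric rooted trees
all of whose vertices have degree at most `m`. -/
def MemAm (m : ℕ) (T : RTree ℕ) : Prop :=
  T.mem.Infinite ∧ T.LocFin ∧ T.SphSymm ∧ ∀ v ∈ T.mem, T.degree v ≤ m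

/-- The set `F_m` of effective-conductance functions of trees in `A_m`. -/
def Fm (m : ℕ) : Set (ℝ → ℝ) :=
  {f | ContinuousOn f (Set.Icc 0 1) ∧
    ∃ T : RTree ℕ, MemAm m T ∧ ∀ lam ∈ Set.Ioc (0 : ℝ) 1, f lam = T.conductance lam}

namespace SAW

/-- Nearest-neighbour adjacency on `ℤ²`. -/
def Adj (x y : ℤ × ℤ) : Prop :=
  (x.1 = y.1 ∧ (x.2 = y.2 + 1 ∨ x.2 + 1 = y.2)) ∨
  (x.2 = y.2 ∧ (x.1 = y.1 + 1 ∨ x.1 + 1 = y.1))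

/-- `l` is the list of successive positions, after the origin, of a self-avoiding
walk starting at the origin and staying in the region `S`. -/
def SAWIn (S : Set (ℤ × ℤ)) (l : List (ℤ × ℤ)) : Prop :=
  List.Chain' Adj ((0, 0) :: l) ∧ ((0, 0) :: l).Nodup ∧ ∀ p ∈ l, p ∈ S

/-- The self-avoiding tree of the region `S`: its vertices are the finite
self-avoiding walks in `S` starting at the origin, two walks being adjacent when
one is a one-step extension of the other. -/
def sawTree (S : Set (ℤ × ℤ)) : RTree (ℤ × ℤ) where
  mem := {l | SAWIn S l}
  root_mem := by exact ⟨List.isChain_singleton _, List.nodup_singleton _, by simp⟩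
  parent_mem := by
    intro v a hv
    obtain ⟨h1, h2, h3⟩ := hv
    have hpre : ((0, 0) :: v) <+: ((0, 0) :: (v ++ [a])) := ⟨[a], by simp⟩
    refine ⟨?_, h2.sublist hpre.sublist, fun p hp => h3 p (by simp [hp])⟩
    have h1' : (((0, 0) :: v) ++ [a]).Chain' Adj := by simpa using h1
    exact (List.isChain_append.mp h1').1

/-- The upper half-plane `ℍ = ℤ × ℤ_{≥0}`. -/
def HH : Set (ℤ × ℤ) := {z | 0 ≤ z.2}

/-- The quadrant `ℚ = ℤ_{≥0} × ℤ_{≥0}`. -/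
def QQ : Set (ℤ × ℤ) := {z | 0 ≤ z.1 ∧ 0 ≤ z.2}

/-- Number of self-avoiding walks of length `n` in `ℤ²` starting at the origin. -/
noncomputable def cSAW (n : ℕ) : ℕ :=
  {l : List (ℤ × ℤ) | l.length = n ∧ SAWIn Set.univ l}.ncard

/-- The connective constant `μ = lim cₙ^{1/n}` of `ℤ²`; by Fekete's subadditive lemma
the limit exists and equals the infimum over `n ≥ 1` of `cₙ^{1/n}`. -/
noncomputable def mu : ℝ := ⨅ n : ℕ, (cSAW (n + 1) : ℝ) ^ (((n : ℝ) + 1)⁻¹)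

/-- Endpoint in `ℤ²` of the finite self-avoiding walk recorded by `l`. -/
def endpt (l : List (ℤ × ℤ)) : ℤ × ℤ := l.getLast?.getD (0, 0)

/-- `l` is a bridge of the horizontal strip `{z : 0 ≤ Im z ≤ ℓ}`: a self-avoiding
walk of the strip starting at the origin with `γ₁(0) < γ₁(i) ≤ γ₁(n)` for `1 ≤ i ≤ n`. -/
def IsStripBridge (width : ℕ) (l : List (ℤ × ℤ)) : Prop :=
  SAWIn {z : ℤ × ℤ | 0 ≤ z.2 ∧ z.2 ≤ (width : ℤ)} l ∧
  ∀ p ∈ l, 0 < p.1 ∧ p.1 ≤ (endpt l).1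

/-- `p^{(ℓ)}_n`, the number of `n`-step bridges of the strip of width `ℓ`. -/
noncomputable def stripBridgeCount (width n : ℕ) : ℕ :=
  {l : List (ℤ × ℤ) | l.length = n ∧ IsStripBridge width l}.ncard

end SAW

/-!
Every tree of `A_m` is dominated by the `m`-regular tree. On a spherically symmetric tree the
distance of `RW_λ` to the root is a Markov chain on `ℕ` which, at a level whose vertices have
`κ ≤ m - 1` children, moves outward with probability `κλ / (1 + κλ)`. It therefore survives less
than the chain with constant outward probability `q = (m-1)λ / (1 + (m-1)λ)`, realised by the
regular tree, whose probability of never returning is `max 0 (1 - x)` with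
`x = (1 - q) / q = ((m-1)λ)⁻¹`. Hence `C(λ, T) ≤ m · max 0 (λ - 1/(m-1))`, the conductance of the
regular tree, which is continuous, and the bound passes to pointwise limits.
-/

/-- Probability that the walk on `ℕ` started at `j ≥ 1`, stepping from `i` to `i + 1` with
probability `p i` and to `i - 1` otherwise, does not reach `0` within `M` steps. -/
noncomputable def levelSurvival (p : ℕ → ℝ) : ℕ → ℕ → ℝ
  | 0, _ => 1
  | M + 1, j => p j * levelSurvival p M (j + 1) +
      if 2 ≤ j then (1 - p j) * levelSurvival p M (j - 1) else 0

namespace levelSurvival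

variable {p : ℕ → ℝ} {q x : ℝ}

lemma nonneg (hp₀ : ∀ j, 0 ≤ p j) (hp₁ : ∀ j, p j ≤ 1) :
    ∀ M j, 0 ≤ levelSurvival p M j
  | 0, _ => zero_le_one
  | M + 1, j => by
    have hR := nonneg hp₀ hp₁ M
    rw [levelSurvival]
    refine add_nonneg (mul_nonneg (hp₀ j) (hR _)) ?_
    split_ifs
    exacts [mul_nonneg (sub_nonneg.mpr (hp₁ j)) (hR _), le_rfl]

lemma const_le_succ (hq₀ : 0 ≤ q) (hq₁ : q ≤ 1) :
    ∀ M j, 1 ≤ j → levelSurvival (fun _ => q) M j ≤ levelSurvival (fun _ => q) M (j + 1)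
  | 0, _, _ => le_rfl
  | M + 1, j, hj => by
    have hmono := const_le_succ hq₀ hq₁ M
    have hup := mul_le_mul_of_nonneg_left (hmono (j + 1) (by omega)) hq₀
    rw [levelSurvival, levelSurvival, if_pos (by omega : 2 ≤ j + 1), Nat.add_sub_cancel]
    split_ifs with h2
    · have hdown := hmono (j - 1) (by omega)
      rw [Nat.sub_add_cancel (by omega : 1 ≤ j)] at hdown
      nlinarith
    · have := nonneg (fun _ => hq₀) (fun _ => hq₁) M j
      nlinarith

lemma le_const (hp : ∀ j, 1 ≤ j → 0 ≤ p j ∧ p j ≤ q) (hq₁ : q ≤ 1) :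
    ∀ M j, 1 ≤ j → levelSurvival p M j ≤ levelSurvival (fun _ => q) M j
  | 0, _, _ => le_rfl
  | M + 1, j, hj => by
    obtain ⟨hpj₀, hpjq⟩ := hp j hj
    have hq₀ : 0 ≤ q := hpj₀.trans hpjq
    have hup := mul_le_mul_of_nonneg_left (le_const hp hq₁ M (j + 1) (by omega)) hpj₀
    have hR₀ := nonneg (fun _ => hq₀) (fun _ => hq₁) M
    rw [levelSurvival, levelSurvival]
    split_ifs with h2
    · have hdown := mul_le_mul_of_nonneg_left (le_const hp hq₁ M (j - 1) (by omega))
        (by linarith : 0 ≤ 1 - p j)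
      have hmono :
          levelSurvival (fun _ => q) M (j - 1) ≤ levelSurvival (fun _ => q) M (j + 1) := by
        have h₁ := const_le_succ hq₀ hq₁ M (j - 1) (by omega)
        rw [Nat.sub_add_cancel (by omega : 1 ≤ j)] at h₁
        exact h₁.trans (const_le_succ hq₀ hq₁ M j hj)
      nlinarith [mul_le_mul_of_nonneg_left hmono (sub_nonneg.mpr hpjq)]
    · nlinarith [hR₀ (j + 1)]

/-- `j ↦ 1 - x ^ j` is harmonic for the walk and vanishes at `0`. -/
lemma one_sub_pow_le (hp : ∀ j, 1 ≤ j → p j = q) (hq₀ : 0 ≤ q) (hx₀ : 0 ≤ x)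
    (hqx : q * x = 1 - q) : ∀ M j, 1 ≤ j → 1 - x ^ j ≤ levelSurvival p M j
  | 0, j, _ => by
    rw [levelSurvival]
    linarith [pow_nonneg hx₀ j]
  | M + 1, j, hj => by
    have hq₁ : 0 ≤ 1 - q := hqx ▸ mul_nonneg hq₀ hx₀
    have hup :=
      mul_le_mul_of_nonneg_left (one_sub_pow_le hp hq₀ hx₀ hqx M (j + 1) (by omega)) hq₀
    rw [levelSurvival, hp j hj]
    split_ifs with h2
    · have hdown := mul_le_mul_of_nonneg_left
        (one_sub_pow_le hp hq₀ hx₀ hqx M (j - 1) (by omega)) hq₁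
      obtain ⟨k, rfl⟩ : ∃ k, j = k + 1 := ⟨j - 1, by omega⟩
      simp only [Nat.add_sub_cancel, pow_succ] at hup hdown ⊢
      linear_combination hup + hdown + x ^ k * (x - 1) * hqx
    · obtain rfl : j = 1 := by omega
      linear_combination hup - (1 - x) * hqx

/-- For `x ≤ y`, `j ↦ 1 - x ^ j + y ^ j r ^ M` is a supersolution of the walk, where
`r = q y + (1 - q) / y` is the factor by which one step multiplies `y ^ j`. -/
lemma const_le (hq₀ : 0 ≤ q) (hx₀ : 0 ≤ x) (hqx : q * x = 1 - q) {y r : ℝ} (hxy : x ≤ y)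
    (hy : 0 < y) (hr : r * y = q * y ^ 2 + (1 - q)) :
    ∀ M j, 1 ≤ j → levelSurvival (fun _ => q) M j ≤ 1 - x ^ j + y ^ j * r ^ M
  | 0, j, _ => by
    rw [levelSurvival, pow_zero, mul_one]
    linarith [pow_le_pow_left₀ hx₀ hxy j]
  | M + 1, j, hj => by
    have hq₁ : 0 ≤ 1 - q := hqx ▸ mul_nonneg hq₀ hx₀
    have hr₀ : 0 ≤ r := nonneg_of_mul_nonneg_left (hr ▸ by positivity) hy
    have hup :=
      mul_le_mul_of_nonneg_left (const_le hq₀ hx₀ hqx hxy hy hr M (j + 1) (by omega)) hq₀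
    rw [levelSurvival]
    split_ifs with h2
    · have hdown := mul_le_mul_of_nonneg_left
        (const_le hq₀ hx₀ hqx hxy hy hr M (j - 1) (by omega)) hq₁
      obtain ⟨k, rfl⟩ : ∃ k, j = k + 1 := ⟨j - 1, by omega⟩
      simp only [Nat.add_sub_cancel, pow_succ] at hup hdown ⊢
      linear_combination hup + hdown - x ^ k * (x - 1) * hqx - y ^ k * r ^ M * hr
    · obtain rfl : j = 1 := by omega
      have hslack : 0 ≤ (1 - q) * r ^ M := mul_nonneg hq₁ (pow_nonneg hr₀ M)
      simp only [pow_succ, pow_zero, one_mul] at hup ⊢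
      linear_combination hup + (1 - x) * hqx - r ^ M * hr + hslack

lemma le_one_sub_of_forall_le (hp : ∀ j, 1 ≤ j → 0 ≤ p j ∧ p j ≤ q) (hx₀ : 0 ≤ x)
    (hx₁ : x < 1) (hqx : q * x = 1 - q) {E : ℝ} (hE : ∀ M, E ≤ levelSurvival p M 1) :
    E ≤ 1 - x := by
  have hq₀ : 0 < q := by nlinarith
  have hq₁ : q ≤ 1 := by nlinarith
  obtain ⟨y, hxy, hy₁⟩ := exists_between hx₁
  have hy : 0 < y := hx₀.trans_lt hxy
  obtain ⟨r, hr⟩ : ∃ r, r * y = q * y ^ 2 + (1 - q) := ⟨_, div_mul_cancel₀ _ hy.ne'⟩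
  have hr₀ : 0 ≤ r := nonneg_of_mul_nonneg_left (hr ▸ by nlinarith) hy
  have hr₁ : r < 1 := by
    have : r * y - 1 * y = q * (y - 1) * (y - x) := by linear_combination hr + (y - 1) * hqx
    nlinarith [mul_pos hq₀ (mul_pos (sub_pos.mpr hy₁) (sub_pos.mpr hxy))]
  have hbound : ∀ M, E ≤ 1 - x + y * r ^ M := fun M => by
    simpa using (hE M).trans ((le_const hp hq₁ M 1 le_rfl).trans
      (const_le hq₀.le hx₀ hqx hxy.le hy hr M 1 le_rfl))
  have hlim : Filter.Tendsto (fun M => 1 - x + y * r ^ M) Filter.atTop (nhds (1 - x + y * 0)) :=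
    (tendsto_pow_atTop_nhds_zero_of_lt_one hr₀ hr₁).const_mul y |>.const_add _
  simpa using ge_of_tendsto' hlim hbound

/-- In the recurrent regime `x ≥ 1` one compares with walks of slightly larger upward
probability, which are transient. -/
lemma le_max_zero_one_sub_of_forall_le (hp : ∀ j, 1 ≤ j → 0 ≤ p j ∧ p j ≤ q)
    (hx₀ : 0 ≤ x) (hqx : q * x = 1 - q) {E : ℝ} (hE : ∀ M, E ≤ levelSurvival p M 1) :
    E ≤ max 0 (1 - x) := by
  rcases lt_or_ge x 1 with hx₁ | hx₁
  · exact le_max_of_le_right (le_one_sub_of_forall_le hp hx₀ hx₁ hqx hE)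
  refine le_max_of_le_left (le_of_forall_pos_le_add fun ε hε => ?_)
  obtain ⟨δ, hδ, hδε, hδ₂⟩ : ∃ δ, 0 < δ ∧ δ ≤ ε ∧ δ ≤ 1 / 2 :=
    ⟨min ε (1 / 2), lt_min hε one_half_pos, min_le_left _ _, min_le_right _ _⟩
  have h2δ : 0 < 2 - δ := by linarith
  have hq : q ≤ 1 / (2 - δ) := by
    rw [le_div_iff₀ h2δ]
    nlinarith
  have := le_one_sub_of_forall_le (fun j hj => ⟨(hp j hj).1, (hp j hj).2.trans hq⟩)
    (by linarith : 0 ≤ 1 - δ) (by linarith) (by field_simp; ring) hE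
  linarith

end levelSurvival

lemma List.forall_get_cons_iff {α : Type*} {P : ℕ → α → Prop} {v : α} {l : List α} :
    (∀ (i : ℕ) (h : i < (v :: l).length), P i ((v :: l).get ⟨i, h⟩)) ↔
      P 0 v ∧ ∀ (i : ℕ) (h : i < l.length), P (i + 1) (l.get ⟨i, h⟩) := by
  refine ⟨fun h => ⟨h 0 (by simp), fun i hi => h (i + 1) (by simpa using hi)⟩, ?_⟩
  rintro ⟨h0, h⟩ (_ | i) hi
  exacts [h0, h i (by simpa using hi)]

namespace RTree

variable {A : Type*} (T : RTree A) {lam : ℝ}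

lemma mem_of_prefix {u v : List A} (huv : u <+: v) (hv : v ∈ T.mem) : u ∈ T.mem := by
  induction v using List.reverseRecOn with
  | nil => rwa [List.prefix_nil.mp huv]
  | append_singleton w a ih =>
    rcases List.prefix_concat_iff.mp huv with rfl | huw
    · exact hv
    · exact ih huw (T.parent_mem w a hv)

lemma dropLast_mem {v : List A} (hv : v ∈ T.mem) : v.dropLast ∈ T.mem :=
  T.mem_of_prefix (List.dropLast_prefix v) hv

lemma children_finite (hT : T.LocFin) (v : List A) : {a : A | v ++ [a] ∈ T.mem}.Finite := by
  by_cases hv : v ∈ T.mem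
  · exact hT v hv
  · convert Set.finite_empty
    exact Set.eq_empty_of_forall_notMem fun a ha => hv (T.parent_mem v a ha)

lemma numChildren_pos {v : List A} {a : A} (hT : T.LocFin) (ha : v ++ [a] ∈ T.mem) :
    0 < T.numChildren v :=
  (Set.ncard_pos (T.children_finite hT v)).mpr ⟨a, ha⟩

lemma level_finite (hT : T.LocFin) (n : ℕ) : {v | v ∈ T.mem ∧ v.length = n}.Finite := by
  induction n with
  | zero => exact (Set.finite_singleton []).subset fun v hv => List.eq_nil_of_length_eq_zero hv.2
  | succ n ih =>
    refine (ih.biUnion fun v _ => (T.children_finite hT v).image (v ++ [·])).subset ?_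
    rintro w ⟨hw, hlen⟩
    obtain ⟨u, a, rfl⟩ := (List.eq_nil_or_concat' w).resolve_left (by rintro rfl; simp at hlen)
    exact Set.mem_biUnion (x := u) ⟨T.parent_mem u a hw, by simpa using hlen⟩ ⟨a, hw, rfl⟩

lemma exists_mem_length_eq (hT : T.LocFin) (hinf : T.mem.Infinite) (n : ℕ) :
    ∃ v ∈ T.mem, v.length = n := by
  obtain ⟨w, hw, hnw⟩ : ∃ w ∈ T.mem, n ≤ w.length := by
    by_contra! h
    refine hinf (((Set.finite_Iio n).biUnion fun k _ => T.level_finite hT k).subset ?_)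
    exact fun w hw => Set.mem_biUnion (x := w.length) (h w hw) ⟨hw, rfl⟩
  exact ⟨w.take n, T.mem_of_prefix (List.take_prefix n w) hw, by simpa using hnw⟩

lemma SphSymm.exists_numChildren_eq {T : RTree A} (hT : T.SphSymm) :
    ∃ κ : ℕ → ℕ, ∀ v ∈ T.mem, T.numChildren v = κ v.length := by
  refine ⟨fun n => if h : ∃ w ∈ T.mem, w.length = n then T.numChildren h.choose else 0,
    fun v hv => ?_⟩
  have h : ∃ w ∈ T.mem, w.length = v.length := ⟨v, hv, rfl⟩
  dsimp only
  rw [dif_pos h]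
  exact hT v hv _ h.choose_spec.1 h.choose_spec.2.symm

noncomputable def childFinset (hT : T.LocFin) (v : List A) : Finset A :=
  (T.children_finite hT v).toFinset

lemma card_childFinset (hT : T.LocFin) (v : List A) :
    (T.childFinset hT v).card = T.numChildren v := by
  rw [numChildren, Set.ncard_eq_toFinset_card _ (T.children_finite hT v), childFinset]

lemma step_nonneg (hlam : 0 ≤ lam) (x y : List A) : 0 ≤ T.step lam x y := by
  unfold step
  split_ifs <;> positivity

lemma pathProb_nonneg (hlam : 0 ≤ lam) : ∀ l : List (List A), 0 ≤ T.pathProb lam l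
  | [] | [_] => zero_le_one
  | _ :: _ :: _ => mul_nonneg (T.step_nonneg hlam _ _) (pathProb_nonneg hlam _)

lemma step_ne_zero {x y : List A} (h : T.step lam x y ≠ 0) :
    (∃ a, x ++ [a] ∈ T.mem ∧ y = x ++ [a]) ∨ y = x.dropLast := by
  unfold step at h
  split_ifs at h with hxy hchild _ hparent
  iterate 2 exact Or.inl (hchild.imp fun a (ha : y = x ++ [a]) => ⟨ha ▸ hxy.2, ha⟩)
  · exact Or.inr hparent.2
  all_goals exact absurd rfl h

lemma step_nil_singleton {a : A} (ha : [a] ∈ T.mem) :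
    T.step lam [] [a] = 1 / T.numChildren [] := by
  unfold step
  rw [if_pos ⟨T.root_mem, ha⟩, if_pos ⟨a, rfl⟩, if_pos rfl]

lemma step_append {v : List A} {a : A} (hv : v ≠ []) (ha : v ++ [a] ∈ T.mem) :
    T.step lam v (v ++ [a]) = lam / (1 + T.numChildren v * lam) := by
  unfold step
  rw [if_pos ⟨T.parent_mem v a ha, ha⟩, if_pos ⟨a, rfl⟩, if_neg hv]

lemma step_dropLast {v : List A} (hv : v ∈ T.mem) (hne : v ≠ []) :
    T.step lam v v.dropLast = 1 / (1 + T.numChildren v * lam) := by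
  unfold step
  rw [if_pos ⟨hv, T.dropLast_mem hv⟩, if_neg, if_pos ⟨hne, rfl⟩]
  rintro ⟨a, ha⟩
  simpa using congrArg List.length ha

lemma step_nil_nil : T.step lam [] [] = 0 := by
  unfold step
  simp

lemma stepSupport_finite (hT : T.LocFin) (lam : ℝ) (v : List A) :
    {y | T.step lam v y ≠ 0}.Finite := by
  refine (((T.children_finite hT v).image (v ++ [·])).insert v.dropLast).subset fun y hy => ?_
  rcases T.step_ne_zero hy with ⟨a, ha, rfl⟩ | rfl
  exacts [Or.inr ⟨a, ha, rfl⟩, Or.inl rfl]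

noncomputable def stepSupport (hT : T.LocFin) (lam : ℝ) (v : List A) : Finset (List A) :=
  (T.stepSupport_finite hT lam v).toFinset

lemma sum_stepSupport (hT : T.LocFin) (v : List A) (F : List A → ℝ) :
    ∑ y ∈ T.stepSupport hT lam v, T.step lam v y * F y =
      ∑ a ∈ T.childFinset hT v, T.step lam v (v ++ [a]) * F (v ++ [a]) +
        T.step lam v v.dropLast * F v.dropLast := by
  have hsub : T.stepSupport hT lam v ⊆
      insert v.dropLast ((T.childFinset hT v).image (v ++ [·])) := by
    intro y hy
    rcases T.step_ne_zero ((T.stepSupport_finite hT lam v).mem_toFinset.mp hy) with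
      ⟨a, ha, rfl⟩ | rfl
    · exact Finset.mem_insert_of_mem
        (Finset.mem_image_of_mem _ ((T.children_finite hT v).mem_toFinset.mpr ha))
    · exact Finset.mem_insert_self _ _
  have hnot : v.dropLast ∉ (T.childFinset hT v).image (v ++ [·]) := by
    simp only [Finset.mem_image, not_exists, not_and]
    intro a _ h
    have := congrArg List.length h
    simp at this
    omega
  rw [Finset.sum_subset hsub fun y _ hy => by
      rw [of_not_not fun h => hy ((T.stepSupport_finite hT lam v).mem_toFinset.mpr h), zero_mul],
    Finset.sum_insert hnot, Finset.sum_image fun a _ b _ h => by simpa using h, add_comm]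

noncomputable def cylProbFrom (lam : ℝ) (M : ℕ) (v : List A) (P : ℕ → List A → Prop) :
    ℝ :=
  ∑' l : {l : List (List A) // l.length = M + 1 ∧ l.head? = some v ∧
      ∀ (i : ℕ) (h : i < l.length), P i (l.get ⟨i, h⟩)},
    T.pathProb lam l.1

lemma cylProb_eq_cylProbFrom (M : ℕ) (P : ℕ → List A → Prop) :
    T.cylProb lam M P = T.cylProbFrom lam M [] P :=
  rfl

lemma cylProbFrom_nonneg (hlam : 0 ≤ lam) (M : ℕ) (v : List A) (P : ℕ → List A → Prop) :
    0 ≤ T.cylProbFrom lam M v P :=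
  tsum_nonneg fun l => T.pathProb_nonneg hlam l.1

lemma cylProbFrom_of_not {P : ℕ → List A → Prop} {v : List A} (hP : ¬ P 0 v) (M : ℕ) :
    T.cylProbFrom lam M v P = 0 := by
  have : IsEmpty {l : List (List A) // l.length = M + 1 ∧ l.head? = some v ∧
      ∀ (i : ℕ) (h : i < l.length), P i (l.get ⟨i, h⟩)} := by
    refine ⟨fun ⟨l, _, hhead, hl⟩ => hP ?_⟩
    obtain ⟨r, rfl⟩ := List.head?_eq_some_iff.mp hhead
    exact hl 0 (by simp)
  exact tsum_empty

noncomputable def walks (hT : T.LocFin) (lam : ℝ) : ℕ → List A → Finset (List (List A))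
  | 0, v => {[v]}
  | M + 1, v =>
    (T.stepSupport hT lam v).biUnion fun y => (walks hT lam M y).image (List.cons v)

lemma exists_eq_cons_of_mem_walks (hT : T.LocFin) {M : ℕ} {v : List A} {l : List (List A)}
    (hl : l ∈ T.walks hT lam M v) : ∃ r, l = v :: r ∧ r.length = M := by
  induction M generalizing v l with
  | zero => exact ⟨[], by simpa [walks] using hl, rfl⟩
  | succ M ih =>
    simp only [walks, Finset.mem_biUnion, Finset.mem_image] at hl
    obtain ⟨y, -, r, hr, rfl⟩ := hl
    obtain ⟨r', rfl, hr'⟩ := ih hr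
    exact ⟨y :: r', rfl, by simp [hr']⟩

lemma mem_walks_of_pathProb_ne_zero (hT : T.LocFin) {v : List A} :
    ∀ {M : ℕ} {r : List (List A)}, r.length = M → T.pathProb lam (v :: r) ≠ 0 →
      v :: r ∈ T.walks hT lam M v
  | 0, [], _, _ => Finset.mem_singleton_self _
  | M + 1, y :: r, hlen, hne => by
    rw [pathProb] at hne
    simp only [walks, Finset.mem_biUnion, Finset.mem_image, List.cons.injEq, true_and]
    exact ⟨y, (T.stepSupport_finite hT lam v).mem_toFinset.mpr (left_ne_zero_of_mul hne),
      y :: r, mem_walks_of_pathProb_ne_zero hT (by simpa using hlen) (right_ne_zero_of_mul hne),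
      rfl⟩

lemma cylProbFrom_eq_sum (hT : T.LocFin) (M : ℕ) (v : List A) (P : ℕ → List A → Prop) :
    T.cylProbFrom lam M v P = ∑ l ∈ T.walks hT lam M v,
      if ∀ (i : ℕ) (h : i < l.length), P i (l.get ⟨i, h⟩) then T.pathProb lam l else 0 := by
  set S : Set (List (List A)) := {l | l.length = M + 1 ∧ l.head? = some v ∧
      ∀ (i : ℕ) (h : i < l.length), P i (l.get ⟨i, h⟩)}
  change ∑' l : S, T.pathProb lam l = _
  rw [tsum_subtype, tsum_eq_sum (s := T.walks hT lam M v)]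
  · refine Finset.sum_congr rfl fun l hl => ?_
    obtain ⟨r, rfl, hr⟩ := T.exists_eq_cons_of_mem_walks hT hl
    by_cases hP : ∀ (i : ℕ) (h : i < (v :: r).length), P i ((v :: r).get ⟨i, h⟩)
    · rw [if_pos hP, Set.indicator_of_mem (show v :: r ∈ S from ⟨by simp [hr], rfl, hP⟩)]
    · rw [if_neg hP, Set.indicator_of_notMem fun h => hP h.2.2]
  · intro l hl
    by_cases hlS : l ∈ S
    · obtain ⟨hlen, hhead, -⟩ := id hlS
      obtain ⟨r, rfl⟩ := List.head?_eq_some_iff.mp hhead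
      rw [Set.indicator_of_mem hlS]
      by_contra hne
      exact hl (T.mem_walks_of_pathProb_ne_zero hT (by simpa using hlen) hne)
    · exact Set.indicator_of_notMem hlS _

lemma cylProbFrom_zero (hT : T.LocFin) {P : ℕ → List A → Prop} {v : List A} (hP : P 0 v) :
    T.cylProbFrom lam 0 v P = 1 := by
  rw [cylProbFrom_eq_sum T hT, walks, Finset.sum_singleton, if_pos, pathProb]
  rintro (_ | i) hi
  exacts [hP, absurd hi (by simp)]

lemma cylProbFrom_succ (hT : T.LocFin) {P : ℕ → List A → Prop} {v : List A} (hP : P 0 v)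
    (M : ℕ) : T.cylProbFrom lam (M + 1) v P = ∑ y ∈ T.stepSupport hT lam v,
      T.step lam v y * T.cylProbFrom lam M y fun i => P (i + 1) := by
  rw [cylProbFrom_eq_sum T hT, walks, Finset.sum_biUnion]
  · refine Finset.sum_congr rfl fun y _ => ?_
    rw [Finset.sum_image fun _ _ _ _ h => List.cons_injective h, cylProbFrom_eq_sum T hT,
      Finset.mul_sum]
    refine Finset.sum_congr rfl fun l hl => ?_
    obtain ⟨r, rfl, -⟩ := T.exists_eq_cons_of_mem_walks hT hl
    simp only [List.forall_get_cons_iff (v := v), hP, true_and, pathProb, mul_ite, mul_zero]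
  · intro y₁ _ y₂ _ hne
    refine Finset.disjoint_left.mpr fun l h₁ h₂ => hne ?_
    simp only [Finset.mem_image] at h₁ h₂
    obtain ⟨l₁, hl₁, rfl⟩ := h₁
    obtain ⟨l₂, hl₂, he⟩ := h₂
    obtain ⟨r₁, rfl, -⟩ := T.exists_eq_cons_of_mem_walks hT hl₁
    obtain ⟨r₂, rfl, -⟩ := T.exists_eq_cons_of_mem_walks hT hl₂
    simp only [List.cons.injEq] at he
    exact he.2.1.symm

lemma cylProbFrom_eq_levelSurvival (hT : T.LocFin) (hlam : 0 ≤ lam) {κ : ℕ → ℕ}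
    (hκ : ∀ v ∈ T.mem, T.numChildren v = κ v.length) (M : ℕ) {v : List A} (hv : v ∈ T.mem)
    (hne : v ≠ []) :
    T.cylProbFrom lam M v (fun _ w => w ≠ []) =
      levelSurvival (fun j => κ j * lam / (1 + κ j * lam)) M v.length := by
  induction M generalizing v with
  | zero => rw [T.cylProbFrom_zero hT hne, levelSurvival]
  | succ M ih =>
    have hchildren : ∀ a ∈ T.childFinset hT v,
        T.step lam v (v ++ [a]) * T.cylProbFrom lam M (v ++ [a]) (fun _ w => w ≠ []) =
          lam / (1 + κ v.length * lam) *
            levelSurvival (fun j => κ j * lam / (1 + κ j * lam)) M (v.length + 1) := by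
      intro a ha
      have ha : v ++ [a] ∈ T.mem := (T.children_finite hT v).mem_toFinset.mp ha
      rw [T.step_append hne ha, hκ v hv, ih ha (by simp), List.length_append,
        List.length_singleton]
    rw [T.cylProbFrom_succ hT hne, sum_stepSupport, Finset.sum_congr rfl hchildren,
      Finset.sum_const, card_childFinset, hκ v hv, nsmul_eq_mul, levelSurvival]
    congr 1
    · field_simp
    · split_ifs with hlen
      · have hdrop : v.dropLast ≠ [] := by
          rw [← List.length_pos_iff, List.length_dropLast]
          omega
        rw [T.step_dropLast hv hne, hκ v hv, ih (T.dropLast_mem hv) hdrop,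
          List.length_dropLast]
        field_simp
        ring
      · have hdrop : v.dropLast = [] := by
          rw [← List.length_eq_zero_iff, List.length_dropLast]
          omega
        rw [hdrop, T.cylProbFrom_of_not (not_not_intro rfl), mul_zero]

lemma cylProb_succ_eq_levelSurvival (hT : T.LocFin) (hlam : 0 ≤ lam) {κ : ℕ → ℕ}
    (hκ : ∀ v ∈ T.mem, T.numChildren v = κ v.length) (hroot : T.numChildren [] ≠ 0)
    (M : ℕ) :
    T.cylProb lam (M + 1) (fun i v => i ≠ 0 → v ≠ []) =
      levelSurvival (fun j => κ j * lam / (1 + κ j * lam)) M 1 := by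
  have hshift : (fun i (w : List A) => i + 1 ≠ 0 → w ≠ []) = fun _ w => w ≠ [] := by
    funext i w
    simp
  have hchildren : ∀ a ∈ T.childFinset hT [],
      T.step lam [] ([] ++ [a]) * T.cylProbFrom lam M ([] ++ [a]) (fun _ w => w ≠ []) =
        1 / T.numChildren [] * levelSurvival (fun j => κ j * lam / (1 + κ j * lam)) M 1 := by
    intro a ha
    have ha : [a] ∈ T.mem := (T.children_finite hT []).mem_toFinset.mp ha
    rw [List.nil_append, T.step_nil_singleton ha,
      T.cylProbFrom_eq_levelSurvival hT hlam hκ M ha (List.cons_ne_nil a []),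
      List.length_singleton]
  rw [T.cylProb_eq_cylProbFrom, T.cylProbFrom_succ hT (fun h => absurd rfl h), hshift,
    sum_stepSupport, List.dropLast_nil, T.step_nil_nil, zero_mul, add_zero,
    Finset.sum_congr rfl hchildren,
    Finset.sum_const, card_childFinset, nsmul_eq_mul, ← mul_assoc, mul_one_div_cancel
      (Nat.cast_ne_zero.mpr hroot), one_mul]

lemma cylProb_nonneg (hlam : 0 ≤ lam) (M : ℕ) (P : ℕ → List A → Prop) :
    0 ≤ T.cylProb lam M P :=
  T.cylProbFrom_nonneg hlam M [] P

lemma escProb_nonneg (hlam : 0 ≤ lam) : 0 ≤ T.escProb lam :=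
  le_ciInf fun M => T.cylProb_nonneg hlam M _

lemma escProb_le_cylProb (hlam : 0 ≤ lam) (M : ℕ) :
    T.escProb lam ≤ T.cylProb lam M fun i v => i ≠ 0 → v ≠ [] :=
  ciInf_le ⟨0, Set.forall_mem_range.mpr fun M => T.cylProb_nonneg hlam M _⟩ M

end RTree

namespace MemAm

variable {m : ℕ} {T : RTree ℕ}

lemma numChildren_nil_pos (hT : MemAm m T) : 0 < T.numChildren [] := by
  obtain ⟨hinf, hLF, -⟩ := hT
  obtain ⟨v, hv, hlen⟩ := T.exists_mem_length_eq hLF hinf 1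
  obtain ⟨a, rfl⟩ := List.length_eq_one_iff.mp hlen
  exact T.numChildren_pos hLF (v := []) hv

lemma numChildren_le (hT : MemAm m T) {v : List ℕ} (hv : v ∈ T.mem) (hne : v ≠ []) :
    T.numChildren v + 1 ≤ m := by
  simpa [RTree.degree, hne] using hT.2.2.2 v hv

lemma two_le (hT : MemAm m T) : 2 ≤ m := by
  have ⟨hinf, hLF, _⟩ := hT
  obtain ⟨v, hv, hlen⟩ := T.exists_mem_length_eq hLF hinf 2
  obtain ⟨u, a, rfl⟩ := v.eq_nil_or_concat'.resolve_left (by rintro rfl; simp at hlen)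
  have hu : u ≠ [] := by rintro rfl; simp at hlen
  have := hT.numChildren_le (T.parent_mem u a hv) hu
  have := T.numChildren_pos hLF hv
  omega

lemma escProb_le (hT : MemAm m T) {lam : ℝ} (hlam : 0 < lam) :
    T.escProb lam ≤ max 0 (1 - ((m - 1) * lam)⁻¹) := by
  have ⟨hinf, hLF, hsym, _⟩ := hT
  obtain ⟨κ, hκ⟩ := hsym.exists_numChildren_eq
  obtain ⟨b, hb, hmb⟩ : ∃ b : ℝ, 0 < b ∧ (m : ℝ) - 1 = b :=
    ⟨_, by linarith [show (2 : ℝ) ≤ m by exact_mod_cast hT.two_le], rfl⟩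
  have hκle : ∀ j, 1 ≤ j → (κ j : ℝ) ≤ b := by
    intro j hj
    obtain ⟨v, hv, rfl⟩ := T.exists_mem_length_eq hLF hinf j
    have := hT.numChildren_le hv (List.ne_nil_of_length_pos hj)
    rw [← hκ v hv, ← hmb, le_sub_iff_add_le]
    exact_mod_cast this
  rw [hmb]
  refine levelSurvival.le_max_zero_one_sub_of_forall_le
    (p := fun j => κ j * lam / (1 + κ j * lam)) (q := b * lam / (1 + b * lam))
    (fun j hj => ⟨by positivity, ?_⟩) (by positivity) (by field_simp; ring) fun M => ?_
  · rw [div_le_div_iff₀ (by positivity) (by positivity)]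
    nlinarith [mul_le_mul_of_nonneg_right (hκle j hj) hlam.le]
  · rw [← T.cylProb_succ_eq_levelSurvival hLF hlam.le hκ hT.numChildren_nil_pos.ne']
    exact T.escProb_le_cylProb hlam.le _

end MemAm

/-- The `m`-regular tree: the root has `m` children and every other vertex `m - 1`, the
children of `v` being `v ++ [a]` for `a` below that number. -/
def regularTree (m : ℕ) : RTree ℕ where
  mem := {l | ∀ (i : ℕ) (h : i < l.length), l[i] < if i = 0 then m else m - 1}
  root_mem := fun i h => absurd h (Nat.not_lt_zero i)
  parent_mem v a hv i h := by
    have := hv i (by simp; omega)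
    rwa [List.getElem_append_left h] at this

namespace regularTree

variable {m : ℕ}

lemma append_mem_iff {v : List ℕ} (hv : v ∈ (regularTree m).mem) (a : ℕ) :
    v ++ [a] ∈ (regularTree m).mem ↔ a < if v = [] then m else m - 1 := by
  refine ⟨fun h => by simpa using h v.length (by simp), fun ha i hi => ?_⟩
  rcases (Nat.lt_succ_iff.mp (by simpa using hi)).lt_or_eq with hi | rfl
  · simpa [List.getElem_append_left hi] using hv i hi
  · simpa [List.length_eq_zero_iff] using ha

lemma children_eq {v : List ℕ} (hv : v ∈ (regularTree m).mem) :
    {a | v ++ [a] ∈ (regularTree m).mem} = Set.Iio (if v = [] then m else m - 1) :=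
  Set.ext (append_mem_iff hv)

lemma numChildren {v : List ℕ} (hv : v ∈ (regularTree m).mem) :
    (regularTree m).numChildren v = if v = [] then m else m - 1 := by
  rw [RTree.numChildren, children_eq hv, ← Finset.coe_range, Set.ncard_coe_finset,
    Finset.card_range]

lemma locFin : (regularTree m).LocFin := fun v hv => by
  rw [children_eq hv]
  exact Set.finite_Iio _

lemma memAm (hm : 2 ≤ m) : MemAm m (regularTree m) := by
  refine ⟨Set.infinite_of_injective_forall_mem (f := (List.replicate · 0))
      (fun a b h => by simpa using congrArg List.length h) fun n i hi => ?_,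
    locFin, fun v hv w hw hvw => ?_, fun v hv => ?_⟩
  · simp only [List.getElem_replicate]
    split_ifs <;> omega
  · simp only [numChildren hv, numChildren hw, ← List.length_eq_zero_iff, hvw]
  · rw [RTree.degree, numChildren hv]
    split_ifs <;> omega

lemma escProb (hm : 2 ≤ m) {lam : ℝ} (hlam : 0 < lam) :
    (regularTree m).escProb lam = max 0 (1 - ((m - 1) * lam)⁻¹) := by
  refine le_antisymm ((memAm hm).escProb_le hlam) (le_ciInf fun M => ?_)
  have hb : (0 : ℝ) < m - 1 := by
    linarith [show (2 : ℝ) ≤ m by exact_mod_cast hm]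
  rcases M with _ | M
  · rw [RTree.cylProb_eq_cylProbFrom, RTree.cylProbFrom_zero _ locFin fun h => absurd rfl h]
    exact max_le zero_le_one (by linarith [inv_pos.mpr (mul_pos hb hlam)])
  refine max_le ((regularTree m).cylProb_nonneg hlam.le _ _) ?_
  rw [RTree.cylProb_succ_eq_levelSurvival _ locFin hlam.le
    (κ := fun j => if j = 0 then m else m - 1)
    (fun v hv => by simp [numChildren hv, ← List.length_eq_zero_iff])
    (by rw [numChildren (regularTree m).root_mem]; simp; omega)]
  simpa using levelSurvival.one_sub_pow_le (q := (m - 1) * lam / (1 + (m - 1) * lam))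
    (x := ((m - 1) * lam)⁻¹)
    (fun j hj => by simp [Nat.pos_iff_ne_zero.mp hj, Nat.cast_sub (by omega : 1 ≤ m)])
    (by positivity) (by positivity) (by field_simp; ring) M 1 le_rfl

lemma conductance (hm : 2 ≤ m) {lam : ℝ} (hlam : 0 ≤ lam) :
    (regularTree m).conductance lam = m * max 0 (lam - ((m : ℝ) - 1)⁻¹) := by
  have hb : (0 : ℝ) < m - 1 := by
    linarith [show (2 : ℝ) ≤ m by exact_mod_cast hm]
  rcases hlam.eq_or_lt with rfl | hlam
  · simp [RTree.conductance, (inv_pos.mpr hb).le]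
  rw [RTree.conductance, escProb hm hlam, numChildren (regularTree m).root_mem, if_pos rfl,
    mul_comm lam, mul_assoc, mul_max_of_nonneg _ _ hlam.le, mul_zero]
  congr 2
  field_simp

lemma continuousOn_conductance (hm : 2 ≤ m) :
    ContinuousOn (regularTree m).conductance (Set.Ici 0) := by
  have : Continuous fun lam : ℝ => m * max 0 (lam - ((m : ℝ) - 1)⁻¹) := by fun_prop
  exact this.continuousOn.congr fun _ hlam => conductance hm hlam

end regularTree

lemma MemAm.conductance_le {m : ℕ} {T : RTree ℕ} (hT : MemAm m T) {lam : ℝ} (hlam : 0 < lam) :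
    T.conductance lam ≤ (regularTree m).conductance lam := by
  have hroot : (T.numChildren [] : ℝ) ≤ m := by
    exact_mod_cast (by simpa [RTree.degree] using hT.2.2.2 [] T.root_mem)
  rw [RTree.conductance, RTree.conductance, regularTree.escProb hT.two_le hlam,
    regularTree.numChildren (regularTree m).root_mem, if_pos rfl]
  have := T.escProb_nonneg hlam.le
  gcongr
  exact hT.escProb_le hlam

theorem uniform_limit_dominated_by_Fm_general (m : ℕ)
    (fseq : ℕ → (ℝ → ℝ)) (f : ℝ → ℝ)
    (hmem : ∀ n, fseq n ∈ Fm m)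
    (hunif : TendstoUniformlyOn fseq f Filter.atTop (Set.Icc 0 1)) :
    ∃ g ∈ Fm m, ∀ lam ∈ Set.Ioc (0 : ℝ) 1, f lam ≤ g lam := by
  obtain ⟨-, T₀, hT₀, -⟩ := hmem 0
  have hm := hT₀.two_le
  refine ⟨(regularTree m).conductance,
    ⟨(regularTree.continuousOn_conductance hm).mono Set.Icc_subset_Ici_self, regularTree m,
      regularTree.memAm hm, fun _ _ => rfl⟩, fun lam hlam => ?_⟩
  refine le_of_tendsto (hunif.tendsto_at (Set.Ioc_subset_Icc_self hlam))
    (Eventually.of_forall fun n => ?_)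
  obtain ⟨-, T, hT, hfT⟩ := hmem n
  rw [hfT lam hlam]
  exact hT.conductance_le hlam.1

/-- Fix `m ∈ ℕ*`. If a sequence of functions of `F_m` converges
uniformly on `[0,1]` to a function `f`, then there is `g ∈ F_m` dominating `f`
on `(0,1]`. -/
theorem uniform_limit_dominated_by_Fm (m : ℕ) (hm : 0 < m)
    (fseq : ℕ → (ℝ → ℝ)) (f : ℝ → ℝ)
    (hmem : ∀ n, fseq n ∈ Fm m)
    (hunif : TendstoUniformlyOn fseq f Filter.atTop (Set.Icc 0 1)) :
    ∃ g ∈ Fm m, ∀ lam ∈ Set.Ioc (0 : ℝ) 1, f lam ≤ g lam :=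
  uniform_limit_dominated_by_Fm_general m fseq f hmem hunif
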